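/- arXiv:2104.11663 — 3 statements merged into one kernel-verified Lean document; each statement's English description precedes it below -/
import Mathlib

section
/- If ℓ⁰ ∈ ℝⁿ is nondecreasing, L > 0, and t₀ is the unique index with L ∈ (Δ_{t₀}, Δ_{t₀+1}] where Δ_t = t·ℓ⁰_{t+1} − ∑_{s≤t} ℓ⁰_s and Δ_n = +∞, then the vector ℓ defined by ℓ_t = (L + ∑_{s=1}^{t₀} ℓ⁰_s)/t₀ − ℓ⁰_t for t ≤ t₀ and ℓ_t = 0 for t > t₀ satisfies ℓ_t ≥ 0 for all t and ∑_t ℓ_t = L. -/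
/-!
Since `Δ n = ⊤`, the strict bound `Δ t₀ < L` forces `t₀ < n` and then says precisely that the
common level `(L + ∑_{s ≤ t₀} ℓ⁰_s) / t₀` lies above `ℓ⁰_{t₀+1}`, hence, by monotonicity, above
every `ℓ⁰_t` with `t ≤ t₀`.
-/

open Finset

theorem Finset.Icc_filter_le_of_le_right {α : Type*} [Preorder α] [LocallyFiniteOrder α]
    {a b c : α} [DecidablePred (· ≤ c)] (hcb : c ≤ b) : {x ∈ Icc a b | x ≤ c} = Icc a c := by
  ext x
  simp only [mem_filter, mem_Icc]
  exact ⟨fun ⟨⟨hax, _⟩, hxc⟩ => ⟨hax, hxc⟩, fun ⟨hax, hxc⟩ => ⟨⟨hax, hxc.trans hcb⟩, hxc⟩⟩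

theorem Finset.sum_Icc_ite_le_of_le {M : Type*} [AddCommMonoid M] {a m n : ℕ} (hmn : m ≤ n)
    (f : ℕ → M) : ∑ t ∈ Icc a n, (if t ≤ m then f t else 0) = ∑ t ∈ Icc a m, f t := by
  rw [← sum_filter, Icc_filter_le_of_le_right hmn]

theorem sum_Icc_waterLevel_sub {m : ℕ} (hm : m ≠ 0) (L : ℝ) (f : ℕ → ℝ) :
    ∑ t ∈ Icc 1 m, ((L + ∑ s ∈ Icc 1 m, f s) / m - f t) = L := by
  rw [sum_sub_distrib, sum_const, Nat.card_Icc, Nat.add_sub_cancel, nsmul_eq_mul,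
    mul_div_cancel₀ _ (Nat.cast_ne_zero.mpr hm), add_sub_cancel_right]

theorem stmt2_general (n : ℕ) (ℓ0 : ℕ → ℝ)
    (hmono : ∀ s t, 1 ≤ s → s ≤ t → t ≤ n → ℓ0 s ≤ ℓ0 t)
    (L : ℝ)
    (Δ : ℕ → EReal)
    (hΔ : ∀ t, t < n →
      Δ t = (((t : ℝ) * ℓ0 (t + 1) - ∑ s ∈ Finset.Icc 1 t, ℓ0 s : ℝ) : EReal))
    (hΔtop : ∀ t, n ≤ t → Δ t = ⊤)
    (t₀ : ℕ) (ht₀1 : 1 ≤ t₀)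
    (hlo : Δ t₀ < ((L : ℝ) : EReal))
    (ℓ : ℕ → ℝ)
    (hℓ : ∀ t, ℓ t =
      if t ≤ t₀ then (L + ∑ s ∈ Finset.Icc 1 t₀, ℓ0 s) / (t₀ : ℝ) - ℓ0 t else 0) :
    (∀ t, 1 ≤ t → t ≤ n → 0 ≤ ℓ t) ∧ (∑ t ∈ Finset.Icc 1 n, ℓ t = L) := by
  have ht₀n : t₀ < n := by
    by_contra! h
    simp [hΔtop t₀ h] at hlo
  have hgap : (t₀ : ℝ) * ℓ0 (t₀ + 1) - ∑ s ∈ Icc 1 t₀, ℓ0 s < L := by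
    rw [hΔ t₀ ht₀n] at hlo
    exact_mod_cast hlo
  have hlevel : ℓ0 (t₀ + 1) ≤ (L + ∑ s ∈ Icc 1 t₀, ℓ0 s) / t₀ := by
    rw [le_div_iff₀ (by exact_mod_cast ht₀1)]
    linarith
  refine ⟨fun t ht1 htn => ?_, ?_⟩
  · rw [hℓ t]
    split_ifs with htt₀
    · linarith [hmono t (t₀ + 1) ht1 (by omega) ht₀n]
    · rfl
  · simp_rw [hℓ]
    rw [sum_Icc_ite_le_of_le ht₀n.le, sum_Icc_waterLevel_sub (by omega)]

/-- Feasibility of the explicit water-filling formula. -/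
theorem stmt2 (n : ℕ) (ℓ0 : ℕ → ℝ)
    (hmono : ∀ s t, 1 ≤ s → s ≤ t → t ≤ n → ℓ0 s ≤ ℓ0 t)
    (L : ℝ) (hL : 0 < L)
    (Δ : ℕ → EReal)
    (hΔ : ∀ t, t < n →
      Δ t = (((t : ℝ) * ℓ0 (t + 1) - ∑ s ∈ Finset.Icc 1 t, ℓ0 s : ℝ) : EReal))
    (hΔtop : ∀ t, n ≤ t → Δ t = ⊤)
    (t₀ : ℕ) (ht₀1 : 1 ≤ t₀) (ht₀n : t₀ ≤ n)
    (hlo : Δ t₀ < ((L : ℝ) : EReal)) (hhi : ((L : ℝ) : EReal) ≤ Δ (t₀ + 1))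
    (ℓ : ℕ → ℝ)
    (hℓ : ∀ t, ℓ t =
      if t ≤ t₀ then (L + ∑ s ∈ Finset.Icc 1 t₀, ℓ0 s) / (t₀ : ℝ) - ℓ0 t else 0) :
    (∀ t, 1 ≤ t → t ≤ n → 0 ≤ ℓ t) ∧ (∑ t ∈ Finset.Icc 1 n, ℓ t = L) :=
  stmt2_general n ℓ0 hmono L Δ hΔ hΔtop t₀ ht₀1 hlo ℓ hℓ
end

section
/- The optimal value of the water-filling problem and its optimal solution set do not depend on the choice of the increasing convex function f: for any two increasing strictly convex differentiable functions f and g, a feasible vector ℓ (with ∑ ℓ_t = L, ℓ_t ≥ 0) minimizes ∑_t f(ℓ⁰_t + ℓ_t) if and only if it minimizes ∑_t g(ℓ⁰_t + ℓ_t). -/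
/-!
A feasible profile minimizes `∑ f (ℓ0 t + ℓ t)` exactly when it is a water-filling profile:
every slot that receives load sits at the lowest total load. This condition does not mention `f`.
If a used slot `s` sat above some slot `t`, moving a little load from `s` to `t` would strictly
lower a strictly convex cost. Conversely, with `c` the derivative of `f` at the water level, the
tangent lines give `f (ℓ0 t + m t) ≥ f (ℓ0 t + ℓ t) + c (m t - ℓ t)` on every slot (on a slot above
the level only `m t ≥ ℓ t = 0` can occur, and there `f' ≥ c`), and the correction terms sum to zero.
-/

open Finset

lemma ConvexOn.add_deriv_mul_sub_le {S : Set ℝ} {f : ℝ → ℝ} (hf : ConvexOn ℝ S f) {x y : ℝ}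
    (hx : x ∈ S) (hy : y ∈ S) (hfx : DifferentiableAt ℝ f x) :
    f x + deriv f x * (y - x) ≤ f y := by
  rcases lt_trichotomy x y with hxy | rfl | hxy
  · have h := hf.deriv_le_slope hx hy hxy hfx
    rw [slope_def_field, le_div_iff₀ (sub_pos.2 hxy)] at h
    linarith
  · simp
  · have h := hf.slope_le_deriv hy hx hxy hfx
    rw [slope_def_field, div_le_iff₀ (sub_pos.2 hxy)] at h
    linarith

lemma StrictConvexOn.add_sub_lt_add {S : Set ℝ} {f : ℝ → ℝ} (hf : StrictConvexOn ℝ S f)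
    {a b ε : ℝ} (ha : a ∈ S) (hb : b ∈ S) (hε : 0 < ε) (hεab : ε < b - a) :
    f (a + ε) + f (b - ε) < f a + f b := by
  have hab : 0 < b - a := hε.trans hεab
  set w := ε / (b - a)
  have hw₀ : 0 < w := div_pos hε hab
  have hw₁ : w < 1 := (div_lt_one hab).2 hεab
  have hwε : w * (b - a) = ε := div_mul_cancel₀ _ hab.ne'
  have hleft := hf.2 ha hb (by linarith) (sub_pos.2 hw₁) hw₀ (sub_add_cancel 1 w)
  have hright := hf.2 ha hb (by linarith) hw₀ (sub_pos.2 hw₁) (add_sub_cancel w 1)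
  simp only [smul_eq_mul] at hleft hright
  rw [show (1 - w) * a + w * b = a + ε by linear_combination hwε] at hleft
  rw [show w * a + (1 - w) * b = b - ε by linear_combination -hwε] at hright
  linarith

variable {ι : Type*} [Fintype ι]

lemma Fintype.sum_add_single_sub_single [DecidableEq ι] (φ : ι → ℝ → ℝ) (v : ι → ℝ)
    {s t : ι} (hst : s ≠ t) (ε : ℝ) :
    ∑ u, φ u ((v + Pi.single t ε - Pi.single s ε : ι → ℝ) u) =
      ∑ u, φ u (v u) + (φ t (v t + ε) - φ t (v t)) + (φ s (v s - ε) - φ s (v s)) := by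
  have hdiff : ∑ u, (φ u ((v + Pi.single t ε - Pi.single s ε : ι → ℝ) u) - φ u (v u)) =
      (φ s (v s - ε) - φ s (v s)) + (φ t (v t + ε) - φ t (v t)) := by
    rw [Fintype.sum_eq_add s t hst fun u ⟨hus, hut⟩ => by simp [hus, hut]]
    simp [hst, hst.symm]
  rw [sum_sub_distrib] at hdiff
  linarith

def IsWaterFilling (ℓ0 ℓ : ι → ℝ) : Prop :=
  ∀ s t, 0 < ℓ s → ℓ0 s + ℓ s ≤ ℓ0 t + ℓ t

lemma IsWaterFilling.exists_level {ℓ0 ℓ : ι → ℝ} (hwf : IsWaterFilling ℓ0 ℓ) :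
    ∃ c, (∀ t, c ≤ ℓ0 t + ℓ t) ∧ ∀ t, 0 < ℓ t → ℓ0 t + ℓ t = c := by
  by_cases hused : ∃ s, 0 < ℓ s
  · obtain ⟨s, hs⟩ := hused
    exact ⟨ℓ0 s + ℓ s, fun t => hwf s t hs, fun t ht => le_antisymm (hwf t s ht) (hwf s t hs)⟩
  · push Not at hused
    obtain ⟨c, hc⟩ := (Set.finite_range fun t => ℓ0 t + ℓ t).bddBelow
    exact ⟨c, fun t => hc ⟨t, rfl⟩, fun t ht => absurd ht (hused t).not_gt⟩

lemma IsWaterFilling.sum_le_sum {f : ℝ → ℝ} (hf : ConvexOn ℝ Set.univ f)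
    (hfd : Differentiable ℝ f) {ℓ0 ℓ m : ι → ℝ} (hwf : IsWaterFilling ℓ0 ℓ)
    (hm : ∀ t, 0 ≤ m t) (hsum : ∑ t, m t = ∑ t, ℓ t) :
    ∑ t, f (ℓ0 t + ℓ t) ≤ ∑ t, f (ℓ0 t + m t) := by
  obtain ⟨c, hc_le, hc_eq⟩ := hwf.exists_level
  have htangent : ∀ t, f (ℓ0 t + ℓ t) + deriv f c * (m t - ℓ t) ≤ f (ℓ0 t + m t) := by
    intro t
    have h := hf.add_deriv_mul_sub_le (Set.mem_univ (ℓ0 t + ℓ t)) (Set.mem_univ (ℓ0 t + m t))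
      (hfd _)
    rw [add_sub_add_left_eq_sub] at h
    rcases le_or_gt (ℓ t) (m t) with hlm | hml
    · have hderiv : deriv f c ≤ deriv f (ℓ0 t + ℓ t) :=
        hf.monotoneOn_deriv (fun x _ => hfd x) (Set.mem_univ _) (Set.mem_univ _) (hc_le t)
      nlinarith
    · rwa [hc_eq t ((hm t).trans_lt hml)] at h ⊢
  calc ∑ t, f (ℓ0 t + ℓ t)
      = ∑ t, (f (ℓ0 t + ℓ t) + deriv f c * (m t - ℓ t)) := by
        rw [sum_add_distrib, ← mul_sum, sum_sub_distrib, hsum, sub_self, mul_zero, add_zero]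
    _ ≤ ∑ t, f (ℓ0 t + m t) := Finset.sum_le_sum fun t _ => htangent t

lemma isWaterFilling_of_forall_sum_le [DecidableEq ι] {f : ℝ → ℝ}
    (hf : StrictConvexOn ℝ Set.univ f) {ℓ0 ℓ : ι → ℝ} (hℓ : ∀ t, 0 ≤ ℓ t)
    (hmin : ∀ m : ι → ℝ, (∀ t, 0 ≤ m t) → ∑ t, m t = ∑ t, ℓ t →
      ∑ t, f (ℓ0 t + ℓ t) ≤ ∑ t, f (ℓ0 t + m t)) :
    IsWaterFilling ℓ0 ℓ := by
  intro s t hs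
  by_contra! hts
  have hst : s ≠ t := by rintro rfl; exact hts.false
  set ε := min (ℓ s) ((ℓ0 s + ℓ s - (ℓ0 t + ℓ t)) / 2)
  have hε : 0 < ε := lt_min hs (by linarith)
  have hεs : ε ≤ ℓ s := min_le_left _ _
  have hεgap : ε ≤ (ℓ0 s + ℓ s - (ℓ0 t + ℓ t)) / 2 := min_le_right _ _
  set m := ℓ + Pi.single t ε - Pi.single s ε with hm_def
  have hm : ∀ u, 0 ≤ m u := by
    intro u
    simp only [m, Pi.add_apply, Pi.sub_apply, Pi.single_apply]
    split_ifs <;> subst_vars <;> linarith [hℓ u]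
  have hmsum : ∑ u, m u = ∑ u, ℓ u := by
    simp [m, sum_add_distrib, sum_sub_distrib]
  have hcost := Fintype.sum_add_single_sub_single (fun u x => f (ℓ0 u + x)) ℓ hst ε
  have hgain : f (ℓ0 t + ℓ t + ε) + f (ℓ0 s + ℓ s - ε) < f (ℓ0 t + ℓ t) + f (ℓ0 s + ℓ s) :=
    hf.add_sub_lt_add (Set.mem_univ _) (Set.mem_univ _) hε (by linarith)
  rw [← hm_def, ← add_assoc, ← add_sub_assoc (ℓ0 s)] at hcost
  linarith [hmin m hm hmsum]

theorem forall_sum_le_iff_isWaterFilling [DecidableEq ι] {f : ℝ → ℝ}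
    (hf : StrictConvexOn ℝ Set.univ f) (hfd : Differentiable ℝ f) {ℓ0 ℓ : ι → ℝ}
    (hℓ : ∀ t, 0 ≤ ℓ t) :
    (∀ m : ι → ℝ, (∀ t, 0 ≤ m t) → ∑ t, m t = ∑ t, ℓ t →
      ∑ t, f (ℓ0 t + ℓ t) ≤ ∑ t, f (ℓ0 t + m t)) ↔ IsWaterFilling ℓ0 ℓ :=
  ⟨isWaterFilling_of_forall_sum_le hf hℓ, fun hwf _ hm hsum =>
    hwf.sum_le_sum hf.convexOn hfd hm hsum⟩

theorem stmt3_general (n : ℕ) (f g : ℝ → ℝ)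
    (hf_conv : StrictConvexOn ℝ Set.univ f)
    (hf_diff : Differentiable ℝ f)
    (hg_conv : StrictConvexOn ℝ Set.univ g)
    (hg_diff : Differentiable ℝ g)
    (ℓ0 : Fin n → ℝ) (L : ℝ)
    (ℓ : Fin n → ℝ) (hpos : ∀ t, 0 ≤ ℓ t) (hsum : ∑ t, ℓ t = L) :
    ((∀ m : Fin n → ℝ, (∀ t, 0 ≤ m t) → (∑ t, m t = L) →
        ∑ t, f (ℓ0 t + ℓ t) ≤ ∑ t, f (ℓ0 t + m t)) ↔
     (∀ m : Fin n → ℝ, (∀ t, 0 ≤ m t) → (∑ t, m t = L) →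
        ∑ t, g (ℓ0 t + ℓ t) ≤ ∑ t, g (ℓ0 t + m t))) := by
  subst hsum
  rw [forall_sum_le_iff_isWaterFilling hf_conv hf_diff hpos,
    forall_sum_le_iff_isWaterFilling hg_conv hg_diff hpos]

/-- The optimal charging profile does not depend on the choice of the increasing
strictly convex differentiable cost function. -/
theorem stmt3 (n : ℕ) (f g : ℝ → ℝ)
    (hf_mono : StrictMono f) (hf_conv : StrictConvexOn ℝ Set.univ f)
    (hf_diff : Differentiable ℝ f)
    (hg_mono : StrictMono g) (hg_conv : StrictConvexOn ℝ Set.univ g)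
    (hg_diff : Differentiable ℝ g)
    (ℓ0 : Fin n → ℝ) (L : ℝ) (hL : 0 < L)
    (ℓ : Fin n → ℝ) (hpos : ∀ t, 0 ≤ ℓ t) (hsum : ∑ t, ℓ t = L) :
    ((∀ m : Fin n → ℝ, (∀ t, 0 ≤ m t) → (∑ t, m t = L) →
        ∑ t, f (ℓ0 t + ℓ t) ≤ ∑ t, f (ℓ0 t + m t)) ↔
     (∀ m : Fin n → ℝ, (∀ t, 0 ≤ m t) → (∑ t, m t = L) →
        ∑ t, g (ℓ0 t + ℓ t) ≤ ∑ t, g (ℓ0 t + m t))) :=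
  stmt3_general n f g hf_conv hf_diff hg_conv hg_diff ℓ0 L ℓ hpos hsum
end

section
/- Consider two EV classes with nested availability windows {1,...,d₁} ⊆ {1,...,d₂} (d₁ ≤ d₂), demands L₁, L₂ > 0, nonflexible load ℓ⁰, and f convex increasing differentiable. Let ℓ¹ be the water-filling solution for demand L₁ on slots {1,...,d₁} against base load ℓ⁰, and let ℓ² be the water-filling solution for demand L₂ on slots {1,...,d₂} against the fictitious base load ℓ⁰ + ℓ¹ (extending ℓ¹ by zero beyond d₁). Then the pair (ℓ¹, ℓ²) minimizes ∑_{t=1}^{d₂} f(ℓ⁰_t + ℓ¹_t + ℓ²_t) over all pairs of feasible profiles (ℓ¹ supported on {1,...,d₁}, nonnegative, summing to L₁; ℓ² supported on {1,...,d₂}, nonnegative, summing to L₂). -/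
/-!
At a water-filling profile the marginal cost `f'` is minimal, over the window, at every slot that
receives charge: moving that slot's charge to another slot of the window cannot lower the cost.
Put `g = f' (ℓ⁰ + ℓ¹ + ℓ²)`. The second water filling makes `g` minimal on `{1, …, d₂}` wherever
`ℓ² > 0`; at a slot with `ℓ¹ > 0` and `ℓ² = 0` we have `g = f' (ℓ⁰ + ℓ¹)`, which is minimal on
`{1, …, d₁}` and bounded by `g` by monotonicity of `f'`. So each `ℓⁱ` minimises the linear cost
`∑ g mⁱ` over its own feasible profiles, and the gradient inequality for the convex `f` turns this
into optimality of the pair.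
-/

open Finset

lemma ConvexOn.deriv_mul_sub_le {S : Set ℝ} {f : ℝ → ℝ} (hfc : ConvexOn ℝ S f) {a b : ℝ}
    (ha : a ∈ S) (hb : b ∈ S) (hfd : DifferentiableAt ℝ f a) :
    deriv f a * (b - a) ≤ f b - f a := by
  rcases lt_trichotomy a b with hab | rfl | hba
  · have h := hfc.deriv_le_slope ha hb hab hfd
    rwa [slope_def_field, le_div_iff₀ (sub_pos.mpr hab)] at h
  · simp
  · have h := hfc.slope_le_deriv hb ha hba hfd
    rw [slope_def_field, div_le_iff₀ (sub_pos.mpr hba)] at h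
    linarith

variable {ι : Type*}

lemma sum_deriv_mul_sub_nonneg_of_isMinOn {f : ℝ → ℝ} (hf : Differentiable ℝ f)
    {S : Finset ι} {C x y : ι → ℝ} {K : Set (ι → ℝ)} (hK : Convex ℝ K)
    (hmin : IsMinOn (fun z => ∑ t ∈ S, f (C t + z t)) K x) (hx : x ∈ K) (hy : y ∈ K) :
    0 ≤ ∑ t ∈ S, deriv f (C t + x t) * (y t - x t) := by
  set φ : ℝ → ℝ := fun ε => ∑ t ∈ S, f (C t + (x t + ε * (y t - x t)))
  have hφ : HasDerivAt φ (∑ t ∈ S, deriv f (C t + x t) * (y t - x t)) 0 := by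
    refine HasDerivAt.fun_sum fun t _ => ?_
    have hline : HasDerivAt (fun ε : ℝ => C t + (x t + ε * (y t - x t))) (y t - x t) 0 := by
      simpa using (((hasDerivAt_id (0 : ℝ)).mul_const (y t - x t)).const_add (x t)).const_add (C t)
    exact (hf _).hasDerivAt.comp_of_eq 0 hline (by simp)
  have hφmin : IsMinOn φ (Set.Icc 0 1) 0 := isMinOn_iff.mpr fun ε hε => by
    simpa [φ] using isMinOn_iff.mp hmin _ (hK.add_smul_sub_mem hx hy hε)
  have hdir : (1 : ℝ) ∈ posTangentConeAt (Set.Icc 0 1) 0 :=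
    mem_posTangentConeAt_of_segment_subset (by simp [segment_eq_Icc])
  simpa using hφmin.localize.hasFDerivWithinAt_nonneg hφ.hasDerivWithinAt hdir

structure IsProfile (S : Finset ι) (L : ℝ) (x : ι → ℝ) : Prop where
  nonneg : ∀ t, 0 ≤ x t
  eq_zero_of_notMem : ∀ t, t ∉ S → x t = 0
  sum_eq : ∑ t ∈ S, x t = L

namespace IsProfile

variable {S : Finset ι} {L : ℝ} {x y : ι → ℝ}

lemma convex_setOf : Convex ℝ {x : ι → ℝ | IsProfile S L x} := by
  intro x hx y hy a b ha hb hab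
  refine ⟨fun t => ?_, fun t ht => ?_, ?_⟩
  · simp only [Pi.add_apply, Pi.smul_apply, smul_eq_mul]
    exact add_nonneg (mul_nonneg ha (hx.nonneg t)) (mul_nonneg hb (hy.nonneg t))
  · simp [hx.eq_zero_of_notMem t ht, hy.eq_zero_of_notMem t ht]
  · simp only [Pi.add_apply, Pi.smul_apply, smul_eq_mul, sum_add_distrib, ← mul_sum, hx.sum_eq,
      hy.sum_eq, ← add_mul, hab, one_mul]

lemma transfer [DecidableEq ι] (hx : IsProfile S L x) {s t : ι} (hs : s ∈ S) (ht : t ∈ S) :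
    IsProfile S L (x + Pi.single s (x t) - Pi.single t (x t)) := by
  refine ⟨fun u => ?_, fun u hu => ?_, ?_⟩
  · have hxu := hx.nonneg u
    have hxt := hx.nonneg t
    simp only [Pi.sub_apply, Pi.add_apply, Pi.single_apply]
    split_ifs <;> subst_vars <;> linarith
  · simp [hx.eq_zero_of_notMem u hu, ne_of_mem_of_not_mem hs hu |>.symm,
      ne_of_mem_of_not_mem ht hu |>.symm]
  · simp [sum_sub_distrib, sum_add_distrib, sum_pi_single', hs, ht, hx.sum_eq]

lemma deriv_le_of_isMinOn [DecidableEq ι] {f : ℝ → ℝ} (hf : Differentiable ℝ f) {C : ι → ℝ}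
    (hx : IsProfile S L x)
    (hmin : IsMinOn (fun z => ∑ t ∈ S, f (C t + z t)) {z | IsProfile S L z} x)
    {s t : ι} (hs : s ∈ S) (ht : t ∈ S) (hxt : 0 < x t) :
    deriv f (C t + x t) ≤ deriv f (C s + x s) := by
  have h := sum_deriv_mul_sub_nonneg_of_isMinOn hf convex_setOf hmin hx (hx.transfer hs ht)
  have hmove : ∀ u, (x + Pi.single s (x t) - Pi.single t (x t) : ι → ℝ) u - x u =
      (Pi.single s (x t) : ι → ℝ) u - (Pi.single t (x t) : ι → ℝ) u := fun u => by simp only [Pi.sub_apply, Pi.add_apply]; ring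
  simp only [hmove, mul_sub, sum_sub_distrib, Pi.single_apply, mul_ite, mul_zero, sum_ite_eq', hs,
    ht, if_true, sub_nonneg] at h
  exact le_of_mul_le_mul_right h hxt

lemma sum_mul_le_sum_mul (hL : 0 < L) (hx : IsProfile S L x) (hy : IsProfile S L y) {g : ι → ℝ}
    (hg : ∀ t ∈ S, 0 < x t → ∀ s ∈ S, g t ≤ g s) :
    ∑ t ∈ S, g t * x t ≤ ∑ t ∈ S, g t * y t := by
  have hpair : ∀ s ∈ S, ∀ t ∈ S, y s * (g t * x t) ≤ y s * (g s * x t) := by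
    intro s hs t ht
    refine mul_le_mul_of_nonneg_left ?_ (hy.nonneg s)
    rcases (hx.nonneg t).eq_or_lt with hxt | hxt
    · simp [← hxt]
    · exact mul_le_mul_of_nonneg_right (hg t ht hxt s hs) hxt.le
  refine le_of_mul_le_mul_left ?_ hL
  calc L * ∑ t ∈ S, g t * x t = ∑ s ∈ S, ∑ t ∈ S, y s * (g t * x t) := by
        simp only [← mul_sum, ← sum_mul, hy.sum_eq]
    _ ≤ ∑ s ∈ S, ∑ t ∈ S, y s * (g s * x t) := sum_le_sum fun s hs => sum_le_sum (hpair s hs)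
    _ = L * ∑ t ∈ S, g t * y t := by
        rw [← hx.sum_eq, sum_mul, sum_comm]
        refine sum_congr rfl fun t _ => ?_
        rw [mul_sum]
        exact sum_congr rfl fun s _ => by ring

lemma sum_mul_eq_of_subset (hx : IsProfile S L x) {T : Finset ι} (hST : S ⊆ T) (g : ι → ℝ) :
    ∑ t ∈ S, g t * x t = ∑ t ∈ T, g t * x t :=
  sum_subset hST fun t _ ht => by rw [hx.eq_zero_of_notMem t ht, mul_zero]

end IsProfile

theorem stmt6_general (d₁ d₂ : ℕ) (hd : d₁ ≤ d₂)
    (f : ℝ → ℝ) (hf_conv : ConvexOn ℝ Set.univ f)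
    (hf_diff : Differentiable ℝ f)
    (ℓ0 : ℕ → ℝ) (L₁ L₂ : ℝ) (hL₁ : 0 < L₁) (hL₂ : 0 < L₂)
    (l1 l2 : ℕ → ℝ)
    (h1pos : ∀ t, 0 ≤ l1 t) (h1supp : ∀ t, t ∉ Finset.Icc 1 d₁ → l1 t = 0)
    (h1sum : ∑ t ∈ Finset.Icc 1 d₁, l1 t = L₁)
    (h1opt : ∀ x : ℕ → ℝ, (∀ t, 0 ≤ x t) → (∀ t, t ∉ Finset.Icc 1 d₁ → x t = 0) →
      (∑ t ∈ Finset.Icc 1 d₁, x t = L₁) →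
      ∑ t ∈ Finset.Icc 1 d₁, f (ℓ0 t + l1 t) ≤ ∑ t ∈ Finset.Icc 1 d₁, f (ℓ0 t + x t))
    (h2pos : ∀ t, 0 ≤ l2 t) (h2supp : ∀ t, t ∉ Finset.Icc 1 d₂ → l2 t = 0)
    (h2sum : ∑ t ∈ Finset.Icc 1 d₂, l2 t = L₂)
    (h2opt : ∀ x : ℕ → ℝ, (∀ t, 0 ≤ x t) → (∀ t, t ∉ Finset.Icc 1 d₂ → x t = 0) →
      (∑ t ∈ Finset.Icc 1 d₂, x t = L₂) →
      ∑ t ∈ Finset.Icc 1 d₂, f (ℓ0 t + l1 t + l2 t) ≤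
        ∑ t ∈ Finset.Icc 1 d₂, f (ℓ0 t + l1 t + x t)) :
    ∀ m1 m2 : ℕ → ℝ,
      (∀ t, 0 ≤ m1 t) → (∀ t, t ∉ Finset.Icc 1 d₁ → m1 t = 0) →
      (∑ t ∈ Finset.Icc 1 d₁, m1 t = L₁) →
      (∀ t, 0 ≤ m2 t) → (∀ t, t ∉ Finset.Icc 1 d₂ → m2 t = 0) →
      (∑ t ∈ Finset.Icc 1 d₂, m2 t = L₂) →
      ∑ t ∈ Finset.Icc 1 d₂, f (ℓ0 t + l1 t + l2 t) ≤
        ∑ t ∈ Finset.Icc 1 d₂, f (ℓ0 t + m1 t + m2 t) := by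
  intro m1 m2 hm1pos hm1supp hm1sum hm2pos hm2supp hm2sum
  have hS : Icc 1 d₁ ⊆ Icc 1 d₂ := Icc_subset_Icc_right hd
  have hl1 : IsProfile (Icc 1 d₁) L₁ l1 := ⟨h1pos, h1supp, h1sum⟩
  have hl2 : IsProfile (Icc 1 d₂) L₂ l2 := ⟨h2pos, h2supp, h2sum⟩
  have hm1 : IsProfile (Icc 1 d₁) L₁ m1 := ⟨hm1pos, hm1supp, hm1sum⟩
  have hm2 : IsProfile (Icc 1 d₂) L₂ m2 := ⟨hm2pos, hm2supp, hm2sum⟩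
  set g : ℕ → ℝ := fun t => deriv f (ℓ0 t + l1 t + l2 t)
  have hg₂ : ∀ t ∈ Icc 1 d₂, 0 < l2 t → ∀ s ∈ Icc 1 d₂, g t ≤ g s := fun t ht hpos s hs =>
    hl2.deriv_le_of_isMinOn hf_diff (C := fun t => ℓ0 t + l1 t)
      (fun y hy => h2opt y hy.nonneg hy.eq_zero_of_notMem hy.sum_eq) hs ht hpos
  have hg₁ : ∀ t ∈ Icc 1 d₁, 0 < l1 t → ∀ s ∈ Icc 1 d₁, g t ≤ g s := by
    intro t ht hpos s hs
    rcases (h2pos t).eq_or_lt with hzero | hpos₂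
    · calc g t = deriv f (ℓ0 t + l1 t) := by simp [g, ← hzero]
        _ ≤ deriv f (ℓ0 s + l1 s) := hl1.deriv_le_of_isMinOn hf_diff
            (fun y hy => h1opt y hy.nonneg hy.eq_zero_of_notMem hy.sum_eq) hs ht hpos
        _ ≤ g s := hf_conv.monotoneOn_deriv (fun x _ => hf_diff x) trivial trivial
            (le_add_of_nonneg_right (h2pos s))
    · exact hg₂ t (hS ht) hpos₂ s (hS hs)
  have h₁ := hl1.sum_mul_le_sum_mul hL₁ hm1 hg₁
  rw [hl1.sum_mul_eq_of_subset hS, hm1.sum_mul_eq_of_subset hS] at h₁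
  have h₂ := hl2.sum_mul_le_sum_mul hL₂ hm2 hg₂
  have hgrad := sum_le_sum fun t (_ : t ∈ Icc 1 d₂) =>
    hf_conv.deriv_mul_sub_le trivial trivial (hf_diff (ℓ0 t + l1 t + l2 t))
      (b := ℓ0 t + m1 t + m2 t)
  have hlin : ∀ t, (ℓ0 t + m1 t + m2 t) - (ℓ0 t + l1 t + l2 t) = m1 t + m2 t - l1 t - l2 t :=
    fun t => by ring
  simp only [hlin, mul_sub, mul_add, sum_sub_distrib, sum_add_distrib] at hgrad
  linarith

/-- Two-class case of Proposition 1: sequential water filling over nested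
windows {1,...,d₁} ⊆ {1,...,d₂} is jointly optimal. -/
theorem stmt6 (d₁ d₂ : ℕ) (hd₁ : 1 ≤ d₁) (hd : d₁ ≤ d₂)
    (f : ℝ → ℝ) (hf_mono : StrictMono f) (hf_conv : ConvexOn ℝ Set.univ f)
    (hf_diff : Differentiable ℝ f)
    (ℓ0 : ℕ → ℝ) (L₁ L₂ : ℝ) (hL₁ : 0 < L₁) (hL₂ : 0 < L₂)
    (l1 l2 : ℕ → ℝ)
    (h1pos : ∀ t, 0 ≤ l1 t) (h1supp : ∀ t, t ∉ Finset.Icc 1 d₁ → l1 t = 0)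
    (h1sum : ∑ t ∈ Finset.Icc 1 d₁, l1 t = L₁)
    (h1opt : ∀ x : ℕ → ℝ, (∀ t, 0 ≤ x t) → (∀ t, t ∉ Finset.Icc 1 d₁ → x t = 0) →
      (∑ t ∈ Finset.Icc 1 d₁, x t = L₁) →
      ∑ t ∈ Finset.Icc 1 d₁, f (ℓ0 t + l1 t) ≤ ∑ t ∈ Finset.Icc 1 d₁, f (ℓ0 t + x t))
    (h2pos : ∀ t, 0 ≤ l2 t) (h2supp : ∀ t, t ∉ Finset.Icc 1 d₂ → l2 t = 0)
    (h2sum : ∑ t ∈ Finset.Icc 1 d₂, l2 t = L₂)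
    (h2opt : ∀ x : ℕ → ℝ, (∀ t, 0 ≤ x t) → (∀ t, t ∉ Finset.Icc 1 d₂ → x t = 0) →
      (∑ t ∈ Finset.Icc 1 d₂, x t = L₂) →
      ∑ t ∈ Finset.Icc 1 d₂, f (ℓ0 t + l1 t + l2 t) ≤
        ∑ t ∈ Finset.Icc 1 d₂, f (ℓ0 t + l1 t + x t)) :
    ∀ m1 m2 : ℕ → ℝ,
      (∀ t, 0 ≤ m1 t) → (∀ t, t ∉ Finset.Icc 1 d₁ → m1 t = 0) →
      (∑ t ∈ Finset.Icc 1 d₁, m1 t = L₁) →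
      (∀ t, 0 ≤ m2 t) → (∀ t, t ∉ Finset.Icc 1 d₂ → m2 t = 0) →
      (∑ t ∈ Finset.Icc 1 d₂, m2 t = L₂) →
      ∑ t ∈ Finset.Icc 1 d₂, f (ℓ0 t + l1 t + l2 t) ≤
        ∑ t ∈ Finset.Icc 1 d₂, f (ℓ0 t + m1 t + m2 t) :=
  stmt6_general d₁ d₂ hd f hf_conv hf_diff ℓ0 L₁ L₂ hL₁ hL₂ l1 l2 h1pos h1supp h1sum h1opt h2pos
    h2supp h2sum h2opt
end
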